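/- Suppose S_1,…,S_K > 0 satisfy the target-SINR constraints S_k/(Σ_{i=k+1}^K S_i + 1) ≥ γ for all k ∈ [K−1] and S_K ≥ γ, where γ > 0. Then for every k ∈ [K], S_k ≥ γ(1+γ)^{K−k}. -/
import Mathlib


open Finset

/-- target-SINR constraints force `S_k ≥ γ(1+γ)^(K−k)`
(with 0-based index `k`, the exponent is `K−1−k`). -/
theorem snr_lower_bound_of_sinr_constraints (K : ℕ) (hK : 1 ≤ K)
    (S : Fin K → ℝ) (γ : ℝ) (hγ : 0 < γ) (hSpos : ∀ k, 0 < S k)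
    (hcon : ∀ k : Fin K, (k : ℕ) < K - 1 →
      S k / ((∑ i ∈ univ.filter (fun i => k < i), S i) + 1) ≥ γ)
    (hlast : S ⟨K - 1, by omega⟩ ≥ γ) :
    ∀ k : Fin K, S k ≥ γ * (1 + γ) ^ (K - 1 - (k : ℕ)) := by
  have key : ∀ d : ℕ, d ≤ K - 1 →
      S ⟨K - 1 - d, by omega⟩ ≥ γ * (1 + γ) ^ d ∧
      (∑ i ∈ univ.filter (fun i : Fin K => (K - 1 - d : ℕ) < (i : ℕ)), S i) + 1
        ≥ (1 + γ) ^ d := by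
    intro d
    induction d with
    | zero =>
      intro _
      have hempty : (univ.filter (fun i : Fin K => (K - 1 - 0 : ℕ) < (i : ℕ))) = ∅ := by
        ext i
        simp only [mem_filter, mem_univ, true_and, Finset.notMem_empty, iff_false]
        have := i.isLt
        omega
      refine ⟨by simpa using hlast, ?_⟩
      rw [hempty]
      simp
    | succ d ih =>
      intro hd1
      obtain ⟨ihS, ihT⟩ := ih (by omega)
      have hm1 : K - 1 - d < K := by omega
      have heq : K - 1 - d = (K - 1 - (d + 1)) + 1 := by omega
      -- split the sum
      have hsplit : (univ.filter (fun i : Fin K => (K - 1 - (d + 1) : ℕ) < (i : ℕ)))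
          = insert (⟨K - 1 - d, hm1⟩ : Fin K)
              (univ.filter (fun i : Fin K => (K - 1 - d : ℕ) < (i : ℕ))) := by
        ext i
        simp only [mem_filter, mem_univ, true_and, Finset.mem_insert, Fin.ext_iff]
        omega
      have hnot : (⟨K - 1 - d, hm1⟩ : Fin K) ∉
          (univ.filter (fun i : Fin K => (K - 1 - d : ℕ) < (i : ℕ))) := by
        simp
      have hsum : (∑ i ∈ univ.filter (fun i : Fin K => (K - 1 - (d + 1) : ℕ) < (i : ℕ)), S i)
          = S ⟨K - 1 - d, hm1⟩
            + ∑ i ∈ univ.filter (fun i : Fin K => (K - 1 - d : ℕ) < (i : ℕ)), S i := by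
        rw [hsplit, Finset.sum_insert hnot]
      have hT : (∑ i ∈ univ.filter (fun i : Fin K => (K - 1 - (d + 1) : ℕ) < (i : ℕ)), S i) + 1
          ≥ (1 + γ) ^ (d + 1) := by
        rw [hsum]
        have : γ * (1 + γ) ^ d + (1 + γ) ^ d = (1 + γ) ^ (d + 1) := by ring
        nlinarith [ihS, ihT]
      refine ⟨?_, hT⟩
      -- use the constraint at k = K - 1 - (d+1)
      set k : Fin K := ⟨K - 1 - (d + 1), by omega⟩ with hk
      have hklt : (k : ℕ) < K - 1 := by simp [hk]; omega
      have hcon' := hcon k hklt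
      have hfeq : (univ.filter (fun i : Fin K => k < i))
          = (univ.filter (fun i : Fin K => (K - 1 - (d + 1) : ℕ) < (i : ℕ))) := by
        apply Finset.filter_congr
        intro i _
        simp [hk, Fin.lt_def]
      rw [hfeq] at hcon'
      have hTpos : (0 : ℝ) <
          (∑ i ∈ univ.filter (fun i : Fin K => (K - 1 - (d + 1) : ℕ) < (i : ℕ)), S i) + 1 := by
        have : (0 : ℝ) ≤ ∑ i ∈ univ.filter (fun i : Fin K => (K - 1 - (d + 1) : ℕ) < (i : ℕ)), S i :=
          Finset.sum_nonneg fun i _ => (hSpos i).le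
        linarith
      have hSk : S k ≥ γ * ((∑ i ∈ univ.filter
          (fun i : Fin K => (K - 1 - (d + 1) : ℕ) < (i : ℕ)), S i) + 1) := by
        exact (le_div_iff₀ hTpos).mp hcon'
      calc S k ≥ γ * ((∑ i ∈ univ.filter
            (fun i : Fin K => (K - 1 - (d + 1) : ℕ) < (i : ℕ)), S i) + 1) := hSk
        _ ≥ γ * (1 + γ) ^ (d + 1) := by
            exact mul_le_mul_of_nonneg_left hT hγ.le
  intro k
  have hkle : (k : ℕ) ≤ K - 1 := by have := k.isLt; omega
  have hd : K - 1 - (K - 1 - (k : ℕ)) = (k : ℕ) := by omega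
  have := (key (K - 1 - (k : ℕ)) (by omega)).1
  have hke : (⟨K - 1 - (K - 1 - (k : ℕ)), by omega⟩ : Fin K) = k := by
    apply Fin.ext; simp [hd]
  rwa [hke] at this
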